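/- arXiv:1110.5449 — 3 statements merged into one kernel-verified Lean document; each statement's English description precedes it below -/
import Mathlib

section
/- For n×n matrices A and B, the Strang splitting satisfies e^{(h/2)B} e^{hA} e^{(h/2)B} = e^{h(A+B)} + O(h³) as h → 0; that is, the difference of the two sides is bounded by C·h³ for small h. -/
open Matrix
attribute [local instance] Matrix.linftyOpNormedAddCommGroup Matrix.linftyOpNormedRing
  Matrix.linftyOpNormedAlgebra

/-!
Let `g(t) = e^{tb} e^{ta} e^{tb} - e^{t(a + 2b)}` in a Banach algebra. A direct computation gives
`g(0) = g'(0) = g''(0) = 0`: the first-order terms of both sides are `a + 2b`, and the second-order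
terms are both `(a + 2b)²`, the symmetric placement of `e^{tb}` producing the cross terms `ab + ba`.
Since `g` is smooth, integrating the bound on `g'''` over `[0, t]` three times gives
`‖g(t)‖ ≤ C |t|³`; the theorem is the case `b = B / 2`.
-/

open NormedSpace Set

section TaylorBound

variable {E : Type*} [NormedAddCommGroup E] [NormedSpace ℝ E]

theorem norm_le_mul_abs_pow_succ_of_hasDerivAt {f f' : ℝ → E} {C r : ℝ} {k : ℕ} (hC : 0 ≤ C)
    (hf : ∀ t, HasDerivAt f (f' t) t) (hf0 : f 0 = 0)
    (hf' : ∀ t, |t| ≤ r → ‖f' t‖ ≤ C * |t| ^ k) {t : ℝ} (ht : |t| ≤ r) :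
    ‖f t‖ ≤ C * |t| ^ (k + 1) := by
  have hbound : ∀ x ∈ uIcc 0 t, ‖f' x‖ ≤ C * |t| ^ k := fun x hx =>
    have hxt : |x| ≤ |t| := by simpa using abs_sub_left_of_mem_uIcc hx
    (hf' x (hxt.trans ht)).trans (by gcongr)
  have := (convex_uIcc (0 : ℝ) t).norm_image_sub_le_of_norm_hasDerivWithin_le
    (fun x _ => (hf x).hasDerivWithinAt) hbound left_mem_uIcc right_mem_uIcc
  rw [hf0, sub_zero, sub_zero, Real.norm_eq_abs] at this
  rwa [pow_succ, ← mul_assoc]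

theorem exists_norm_le_mul_abs_pow_of_iteratedDeriv_eq_zero (n : ℕ) {f : ℝ → E}
    (hf : ContDiff ℝ n f) (hf0 : ∀ k < n, iteratedDeriv k f 0 = 0) (r : ℝ) :
    ∃ C, 0 < C ∧ ∀ t, |t| ≤ r → ‖f t‖ ≤ C * |t| ^ n := by
  induction n generalizing f with
  | zero =>
    obtain ⟨C, hC⟩ := (isCompact_Icc (a := -r) (b := r)).exists_bound_of_continuousOn
      hf.continuous.continuousOn
    refine ⟨max C 1, by positivity, fun t ht => ?_⟩
    rw [pow_zero, mul_one]
    exact (hC t (abs_le.1 ht)).trans (le_max_left _ _)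
  | succ n ih =>
    have hdiff : Differentiable ℝ f := hf.differentiable (by simp)
    obtain ⟨C, hC, hbound⟩ := ih (f := deriv f) (by exact_mod_cast hf.deriv')
      fun k hk => by simpa [← iteratedDeriv_succ'] using hf0 (k + 1) (by omega)
    refine ⟨C, hC, fun t ht => ?_⟩
    exact norm_le_mul_abs_pow_succ_of_hasDerivAt hC.le (fun t => (hdiff t).hasDerivAt)
      (by simpa using hf0 0 (by omega)) hbound ht

end TaylorBound

section Strang

variable {𝔸 : Type*} [NormedRing 𝔸] [NormedAlgebra ℝ 𝔸] [CompleteSpace 𝔸]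

theorem hasDerivAt_exp_smul_mul_exp_smul_mul_exp_smul (a b : 𝔸) (t : ℝ) :
    HasDerivAt (fun u : ℝ => exp (u • b) * exp (u • a) * exp (u • b))
      (b * (exp (t • b) * exp (t • a) * exp (t • b)) + exp (t • b) * exp (t • a) * exp (t • b) * b
        + exp (t • b) * a * exp (t • a) * exp (t • b)) t := by
  refine (((hasDerivAt_exp_smul_const' b t).mul (hasDerivAt_exp_smul_const' a t)).mul
    (hasDerivAt_exp_smul_const b t)).congr_deriv ?_
  simp only [Pi.mul_apply]
  noncomm_ring

theorem hasDerivAt_exp_smul_mul_mul_exp_smul_mul_exp_smul_zero (a b : 𝔸) :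
    HasDerivAt (fun u : ℝ => exp (u • b) * a * exp (u • a) * exp (u • b))
      (b * a + a * a + a * b) 0 := by
  refine ((((hasDerivAt_exp_smul_const' b (0 : ℝ)).mul_const a).mul
    (hasDerivAt_exp_smul_const' a 0)).mul (hasDerivAt_exp_smul_const b 0)).congr_deriv ?_
  simp only [Pi.mul_apply, zero_smul, exp_zero, mul_one, one_mul]

theorem iteratedDeriv_exp_smul_mul_exp_smul_mul_exp_smul_sub_exp_eq_zero (a b : 𝔸) {k : ℕ}
    (hk : k < 3) :
    iteratedDeriv k
      (fun t : ℝ => exp (t • b) * exp (t • a) * exp (t • b) - exp (t • (a + 2 • b))) 0 = 0 := by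
  have hderiv : deriv (fun t : ℝ => exp (t • b) * exp (t • a) * exp (t • b) - exp (t • (a + 2 • b)))
      = fun t => b * (exp (t • b) * exp (t • a) * exp (t • b))
        + exp (t • b) * exp (t • a) * exp (t • b) * b
        + exp (t • b) * a * exp (t • a) * exp (t • b) - (a + 2 • b) * exp (t • (a + 2 • b)) :=
    funext fun t => ((hasDerivAt_exp_smul_mul_exp_smul_mul_exp_smul a b t).sub
      (hasDerivAt_exp_smul_const' _ t)).deriv
  interval_cases k
  · simp
  · simp only [iteratedDeriv_one, hderiv, zero_smul, exp_zero, mul_one, one_mul]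
    abel
  · rw [iteratedDeriv_succ, iteratedDeriv_one, hderiv]
    have hP := hasDerivAt_exp_smul_mul_exp_smul_mul_exp_smul a b 0
    refine ((((hP.const_mul b).add (hP.mul_const b)).add
      (hasDerivAt_exp_smul_mul_mul_exp_smul_mul_exp_smul_zero a b)).sub
      ((hasDerivAt_exp_smul_const' (a + 2 • b) (0 : ℝ)).const_mul _)).deriv.trans ?_
    simp only [zero_smul, exp_zero, mul_one, one_mul]
    noncomm_ring

theorem contDiff_exp_smul (x : 𝔸) {n : WithTop ℕ∞} : ContDiff ℝ n fun t : ℝ => exp (t • x) :=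
  (contDiff_iff_contDiffAt.2 fun y => (exp_analytic (𝕂 := ℝ) y).contDiffAt).comp
    (contDiff_id.smul contDiff_const)

theorem exists_norm_exp_half_smul_mul_exp_smul_mul_exp_half_smul_sub_exp_le (a b : 𝔸) :
    ∃ C δ : ℝ, 0 < C ∧ 0 < δ ∧ ∀ h : ℝ, |h| ≤ δ →
      ‖exp ((h / 2) • b) * exp (h • a) * exp ((h / 2) • b) - exp (h • (a + b))‖
        ≤ C * |h| ^ 3 := by
  set c := (2 : ℝ)⁻¹ • b
  have hc : a + 2 • c = a + b := by module
  have hsmooth : ContDiff ℝ 3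
      fun t : ℝ => exp (t • c) * exp (t • a) * exp (t • c) - exp (t • (a + 2 • c)) :=
    (((contDiff_exp_smul c).mul (contDiff_exp_smul a)).mul (contDiff_exp_smul c)).sub
      (contDiff_exp_smul _)
  obtain ⟨C, hC, hbound⟩ := exists_norm_le_mul_abs_pow_of_iteratedDeriv_eq_zero 3 hsmooth
    (fun _ hk => iteratedDeriv_exp_smul_mul_exp_smul_mul_exp_smul_sub_exp_eq_zero a c hk) 1
  refine ⟨C, 1, hC, one_pos, fun h hh => ?_⟩
  simpa only [c, hc, smul_smul, div_eq_mul_inv] using hbound h hh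

end Strang

/-- The Strang splitting is a second-order approximation:
`e^{(h/2)B} e^{hA} e^{(h/2)B} = e^{h(A+B)} + O(h³)` as `h → 0`. -/
theorem strang_splitting_second_order (n : ℕ)
    (A B : Matrix (Fin n) (Fin n) ℝ) :
    ∃ C δ : ℝ, 0 < C ∧ 0 < δ ∧ ∀ h : ℝ, |h| ≤ δ →
      ‖NormedSpace.exp ((h / 2) • B) * NormedSpace.exp (h • A) *
          NormedSpace.exp ((h / 2) • B) -
        NormedSpace.exp (h • (A + B))‖ ≤ C * |h| ^ 3 :=
  exists_norm_exp_half_smul_mul_exp_smul_mul_exp_half_smul_sub_exp_le A B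
end

section
/- For n×n matrices A and B, the Burstein–Mirin combination D(h) = (2/3)(S_AB(h) + S_BA(h)) - (1/3)S(h), where S_AB(h) = e^{(h/2)B}e^{hA}e^{(h/2)B}, S_BA(h) = e^{(h/2)A}e^{hB}e^{(h/2)A}, and S(h) = ½(e^{hA}e^{hB} + e^{hB}e^{hA}), satisfies D(h) = e^{h(A+B)} + O(h⁴). -/
open Matrix
attribute [local instance] Matrix.linftyOpNormedAddCommGroup Matrix.linftyOpNormedRing
  Matrix.linftyOpNormedAlgebra

/-!
Replace each exponential `e^{h a}` by its cubic Taylor polynomial `∑_{k<4} h^k a^k / k!`, viewed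
as a polynomial in `h` with coefficients in the (noncommutative) algebra. The analytic error of
this replacement is `O(h⁴)` for every factor, hence for the whole combination. What remains is
the algebraic fact that the Burstein–Mirin combination of these polynomials agrees with the cubic
Taylor polynomial of `e^{h(A+B)}` in the coefficients of `h⁰, …, h³`; so their difference is
`h⁴` times a polynomial.
-/

open Polynomial Asymptotics Filter Topology
open scoped Nat

section Algebra

variable {𝔸 : Type*} [Ring 𝔸] [Algebra ℝ 𝔸]

/-- A polynomial with coefficients in `𝔸` as the function `t ↦ ∑ tᵏ • pₖ`; real scalars are
central, so this is an algebra map even when `𝔸` is not commutative. -/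
noncomputable def Polynomial.evalReal : 𝔸[X] →ₐ[ℝ] (ℝ → 𝔸) :=
  AlgHom.pi fun t =>
    { eval₂RingHom' (RingHom.id 𝔸) (algebraMap ℝ 𝔸 t) fun a => (Algebra.commutes t a).symm with
      commutes' := fun _ => eval₂_C _ _ }

lemma Polynomial.evalReal_apply (p : 𝔸[X]) (t : ℝ) :
    evalReal p t = p.eval (algebraMap ℝ 𝔸 t) := rfl

noncomputable def expTaylor (n : ℕ) (a : 𝔸) : 𝔸[X] :=
  ∑ k ∈ Finset.range n, monomial k ((k !⁻¹ : ℝ) • a ^ k)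

lemma coeff_expTaylor (n k : ℕ) (a : 𝔸) :
    (expTaylor n a).coeff k = if k < n then (k !⁻¹ : ℝ) • a ^ k else 0 := by
  simp [expTaylor, finsetSum_coeff, coeff_monomial]

/-- The paper's `D(h)`, with each flow `e^{ha}` replaced by `E a`. -/
noncomputable def bursteinMirin {M R : Type*} [SMul ℝ M] [Ring R] [Module ℝ R] (E : M → R)
    (A B : M) : R :=
  (2 / 3 : ℝ) • (E ((1 / 2 : ℝ) • B) * E A * E ((1 / 2 : ℝ) • B) +
      E ((1 / 2 : ℝ) • A) * E B * E ((1 / 2 : ℝ) • A)) -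
    (1 / 3 : ℝ) • ((1 / 2 : ℝ) • (E A * E B + E B * E A))

lemma map_bursteinMirin {M R S : Type*} [SMul ℝ M] [Ring R] [Algebra ℝ R] [Ring S]
    [Algebra ℝ S] (f : R →ₐ[ℝ] S) (E : M → R) (A B : M) :
    f (bursteinMirin E A B) = bursteinMirin (f ∘ E) A B := by
  simp [bursteinMirin]

/-- The order conditions of the Burstein–Mirin scheme up to order three. -/
lemma coeff_bursteinMirin_expTaylor_sub_expTaylor_add (A B : 𝔸) :
    ∀ k < 4, (bursteinMirin (expTaylor 4) A B - expTaylor 4 (A + B)).coeff k = 0 := by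
  intro k hk
  interval_cases k <;>
  simp only [bursteinMirin, coeff_sub, coeff_add, coeff_smul, coeff_mul, coeff_expTaylor,
    Finset.Nat.sum_antidiagonal_eq_sum_range_succ_mk, Finset.sum_range_succ,
    Finset.sum_range_zero, Nat.reduceLT, ↓reduceIte, Nat.factorial, Nat.reduceMul,
    Nat.reduceAdd, Nat.reduceSub, Nat.succ_eq_add_one, Nat.cast_one, Nat.cast_ofNat, inv_one,
    zero_add, one_smul, pow_zero, pow_one] <;>
  simp only [pow_succ, pow_zero, one_mul, mul_one, smul_add, mul_add, add_mul, smul_mul_assoc,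
    mul_smul_comm, smul_smul, mul_assoc] <;>
  module

end Algebra

section Analysis

variable {𝔸 : Type*} [NormedRing 𝔸] [NormedAlgebra ℝ 𝔸]

lemma Polynomial.continuous_evalReal (p : 𝔸[X]) : Continuous (evalReal p) :=
  p.continuous.comp (continuous_algebraMap ℝ 𝔸)

lemma Polynomial.isBigO_evalReal_of_coeff_eq_zero {n : ℕ} {p : 𝔸[X]}
    (hp : ∀ k < n, p.coeff k = 0) : evalReal p =O[𝓝 0] (· ^ n) := by
  obtain ⟨q, rfl⟩ := X_pow_dvd_iff.2 hp
  have hq : evalReal q =O[𝓝 0] fun _ => (1 : ℝ) :=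
    ((continuous_evalReal q).tendsto 0).isBigO_one ℝ
  have hsmul := (isBigO_refl (fun t : ℝ => t ^ n) (𝓝 0)).smul hq
  simp only [smul_eq_mul, mul_one] at hsmul
  refine hsmul.congr_left fun t => ?_
  rw [map_mul, map_pow, Pi.mul_apply, Pi.pow_apply, evalReal_apply X, eval_X, ← map_pow,
    ← Algebra.smul_def]

lemma evalReal_expTaylor (n : ℕ) (a : 𝔸) (t : ℝ) :
    evalReal (expTaylor n a) t = (NormedSpace.expSeries ℝ 𝔸).partialSum n (t • a) := by
  rw [evalReal_apply, expTaylor, eval_finsetSum]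
  refine Finset.sum_congr rfl fun k _ => ?_
  rw [NormedSpace.expSeries_apply_eq, eval_monomial, ← map_pow, ← Algebra.commutes,
    ← Algebra.smul_def, _root_.smul_pow, smul_comm]

lemma isBigO_exp_smul_sub_evalReal_expTaylor [CompleteSpace 𝔸] (n : ℕ) (a : 𝔸) :
    ((fun t : ℝ => NormedSpace.exp (t • a)) - evalReal (expTaylor n a)) =O[𝓝 0] (· ^ n) := by
  have hsmul : Tendsto (fun t : ℝ => t • a) (𝓝 0) (𝓝 0) := by
    simpa using (tendsto_id (x := 𝓝 (0 : ℝ))).smul_const a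
  have hnorm : (fun t : ℝ => ‖t • a‖ ^ n) =O[𝓝 0] (· ^ n) :=
    isBigO_iff.2 ⟨‖a‖ ^ n, Eventually.of_forall fun t => by simp [norm_smul, mul_pow, mul_comm]⟩
  have hexp :=
    (NormedSpace.exp_hasFPowerSeriesAt_zero (𝕂 := ℝ) (𝔸 := 𝔸)).isBigO_sub_partialSum_pow n
  refine ((hexp.comp_tendsto hsmul).trans hnorm).congr_left fun t => ?_
  simp [evalReal_expTaylor]

lemma Asymptotics.IsBigO.mul_sub_mul {α R : Type*} [SeminormedRing R] {l : Filter α}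
    {f₁ f₂ g₁ g₂ : α → R} {k : α → ℝ} (h₁ : (f₁ - g₁) =O[l] k) (h₂ : (f₂ - g₂) =O[l] k)
    (hf₂ : f₂ =O[l] fun _ => (1 : ℝ)) (hg₁ : g₁ =O[l] fun _ => (1 : ℝ)) :
    (f₁ * f₂ - g₁ * g₂) =O[l] k := by
  rw [show f₁ * f₂ - g₁ * g₂ = (f₁ - g₁) * f₂ + g₁ * (f₂ - g₂) by noncomm_ring]
  exact ((h₁.mul hf₂).congr_right (by simp)).add ((hg₁.mul h₂).congr_right (by simp))

lemma isBigO_bursteinMirin_sub_bursteinMirin {M α : Type*} [SMul ℝ M] {l : Filter α}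
    {k : α → ℝ} {E F : M → α → 𝔸} (hEF : ∀ a, (E a - F a) =O[l] k)
    (hE : ∀ a, E a =O[l] fun _ => (1 : ℝ)) (hF : ∀ a, F a =O[l] fun _ => (1 : ℝ)) (A B : M) :
    (bursteinMirin E A B - bursteinMirin F A B) =O[l] k := by
  have hF₂ : ∀ a b, (F a * F b) =O[l] fun _ => (1 : ℝ) := fun a b =>
    ((hF a).mul (hF b)).congr_right (by simp)
  have h₂ : ∀ a b, (E a * E b - F a * F b) =O[l] k := fun a b =>
    (hEF a).mul_sub_mul (hEF b) (hE b) (hF a)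
  have h₃ : ∀ a b c, (E a * E b * E c - F a * F b * F c) =O[l] k := fun a b c =>
    (h₂ a b).mul_sub_mul (hEF c) (hE c) (hF₂ a b)
  refine ((((h₃ ((1 / 2 : ℝ) • B) A ((1 / 2 : ℝ) • B)).add
    (h₃ ((1 / 2 : ℝ) • A) B ((1 / 2 : ℝ) • A))).const_smul_left (2 / 3 : ℝ)).sub
    ((((h₂ A B).add (h₂ B A)).const_smul_left (1 / 2 : ℝ)).const_smul_left (1 / 3 : ℝ))
    ).congr_left fun t => ?_
  simp only [bursteinMirin, Pi.sub_apply, Pi.add_apply, Pi.smul_apply, Pi.mul_apply, smul_sub,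
    smul_add]
  abel

lemma isBigO_bursteinMirin_exp_sub_exp_add [CompleteSpace 𝔸] (A B : 𝔸) :
    (bursteinMirin (fun a (t : ℝ) => NormedSpace.exp (t • a)) A B -
      fun t => NormedSpace.exp (t • (A + B))) =O[𝓝 0] (· ^ 4) := by
  set E : 𝔸 → ℝ → 𝔸 := fun a t => NormedSpace.exp (t • a)
  set T : 𝔸 → ℝ → 𝔸 := fun a => evalReal (expTaylor 4 a)
  have hET : ∀ a, (E a - T a) =O[𝓝 0] (· ^ 4) := isBigO_exp_smul_sub_evalReal_expTaylor 4
  have hE : ∀ a, E a =O[𝓝 0] fun _ => (1 : ℝ) := fun a =>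
    (hasDerivAt_exp_smul_const a (0 : ℝ)).continuousAt.tendsto.isBigO_one ℝ
  have hT : ∀ a, T a =O[𝓝 0] fun _ => (1 : ℝ) := fun a =>
    ((continuous_evalReal _).tendsto 0).isBigO_one ℝ
  have hpoly : (bursteinMirin T A B - T (A + B)) =O[𝓝 0] (· ^ 4) := by
    have h := isBigO_evalReal_of_coeff_eq_zero (coeff_bursteinMirin_expTaylor_sub_expTaylor_add A B)
    rwa [map_sub, map_bursteinMirin] at h
  have hcomb := isBigO_bursteinMirin_sub_bursteinMirin hET hE hT A B
  refine ((hcomb.sub (hET (A + B))).add hpoly).congr_left fun t => ?_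
  simp only [Pi.sub_apply]
  abel

end Analysis

lemma exists_pos_bound_of_isBigO_pow {E : Type*} [SeminormedAddCommGroup E] {f : ℝ → E} {n : ℕ}
    (hf : f =O[𝓝 0] (· ^ n)) :
    ∃ C δ : ℝ, 0 < C ∧ 0 < δ ∧ ∀ h : ℝ, |h| ≤ δ → ‖f h‖ ≤ C * |h| ^ n := by
  obtain ⟨C, hC, hCf⟩ := hf.exists_pos
  obtain ⟨δ, hδ, hball⟩ := Metric.nhds_basis_closedBall.eventually_iff.1 hCf.bound
  exact ⟨C, δ, hC, hδ, fun h hh => by simpa using hball (by simpa using hh)⟩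

/-- The Burstein–Mirin combination
`D h = (2/3)(S_AB h + S_BA h) - (1/3) S h` is a third-order approximation:
`D h = e^{h(A+B)} + O(h⁴)`. -/
theorem burstein_mirin_third_order (n : ℕ)
    (A B : Matrix (Fin n) (Fin n) ℝ) :
    ∃ C δ : ℝ, 0 < C ∧ 0 < δ ∧ ∀ h : ℝ, |h| ≤ δ →
      ‖(2 / 3 : ℝ) • (NormedSpace.exp ((h / 2) • B) * NormedSpace.exp (h • A) *
            NormedSpace.exp ((h / 2) • B) +
          NormedSpace.exp ((h / 2) • A) * NormedSpace.exp (h • B) *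
            NormedSpace.exp ((h / 2) • A)) -
        (1 / 3 : ℝ) • ((1 / 2 : ℝ) • (NormedSpace.exp (h • A) * NormedSpace.exp (h • B) +
          NormedSpace.exp (h • B) * NormedSpace.exp (h • A))) -
        NormedSpace.exp (h • (A + B))‖ ≤ C * |h| ^ 4 := by
  obtain ⟨C, δ, hC, hδ, hbound⟩ :=
    exists_pos_bound_of_isBigO_pow (isBigO_bursteinMirin_exp_sub_exp_add A B)
  refine ⟨C, δ, hC, hδ, fun h hh => ?_⟩
  have hhalf : ∀ X : Matrix (Fin n) (Fin n) ℝ, h • ((1 / 2 : ℝ) • X) = (h / 2) • X := fun X => by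
    rw [smul_smul, mul_one_div]
  have key := hbound h hh
  simp only [bursteinMirin, hhalf, Pi.sub_apply, Pi.add_apply, Pi.smul_apply, Pi.mul_apply] at key
  exact key
end

section
/- For n×n matrices A and B, the fourth-order multi-product expansion T₄(h) = -⅓T₂(h) + (4/3)T₂(h/2)² with T₂(h) = e^{(h/2)B}e^{hA}e^{(h/2)B} satisfies T₄(h) = e^{h(A+B)} + O(h⁵). -/
/-!
Put `X = A + B` and `T₂(h) = e^{hX/2} M(h) e^{hX/2}`. The Strang splitting is symmetric,
`T₂(h) T₂(-h) = 1`, hence so is `M`, and it is consistent: `M(h) = 1 + O(h²)`. For `R = M - 1`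
symmetry reads `R(h) + R(-h) = -R(h) R(-h)`, so the even part of `R` vanishes to twice the order
of `R`. As the leading term of an analytic function vanishing to even order is even, this lifts
`R = O(h²)` to `R = O(h³)` and then to `R(h) = h³K + O(h⁵)`. Substituted into
`-⅓ T₂(h) + ⁴⁄₃ T₂(h/2)²`, the `h³K` contributions add up to `(h³/6) u [[K, u], u] u` with
`u = e^{hX/4}`, which is `O(h⁵)` because `u = 1 + O(h)`. Here `O(hᵏ)` means vanishing to order
`k` at `0` (`analyticOrderAt`), all functions involved being analytic.
-/

open Topology NormedSpace

section AnalyticOrder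

variable {𝕜 : Type*} [NontriviallyNormedField 𝕜] {E : Type*} [NormedAddCommGroup E]
  [NormedSpace 𝕜 E] {𝔸 : Type*} [NormedRing 𝔸] [NormedAlgebra 𝕜 𝔸] {z₀ : 𝕜}

lemma le_analyticOrderAt_fun_add {f g : 𝕜 → E} {n : ℕ∞} (hf : n ≤ analyticOrderAt f z₀)
    (hg : n ≤ analyticOrderAt g z₀) : n ≤ analyticOrderAt (fun z ↦ f z + g z) z₀ :=
  (le_min hf hg).trans le_analyticOrderAt_add

lemma le_analyticOrderAt_fun_sub {f g : 𝕜 → E} {n : ℕ∞} (hf : n ≤ analyticOrderAt f z₀)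
    (hg : n ≤ analyticOrderAt g z₀) : n ≤ analyticOrderAt (fun z ↦ f z - g z) z₀ :=
  (le_min hf hg).trans le_analyticOrderAt_sub

lemma le_analyticOrderAt_const_smul {f : 𝕜 → E} (hf : AnalyticAt 𝕜 f z₀) (c : 𝕜) :
    analyticOrderAt f z₀ ≤ analyticOrderAt (fun z ↦ c • f z) z₀ :=
  le_add_self.trans_eq (analyticOrderAt_smul (f := fun _ ↦ c) analyticAt_const hf).symm

lemma le_analyticOrderAt_fun_mul {f g : 𝕜 → 𝔸} (hf : AnalyticAt 𝕜 f z₀)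
    (hg : AnalyticAt 𝕜 g z₀) {m n : ℕ} (hm : m ≤ analyticOrderAt f z₀)
    (hn : n ≤ analyticOrderAt g z₀) : (m + n : ℕ∞) ≤ analyticOrderAt (fun z ↦ f z * g z) z₀ := by
  obtain ⟨F, hF, hfF⟩ := (natCast_le_analyticOrderAt hf).mp hm
  obtain ⟨G, hG, hgG⟩ := (natCast_le_analyticOrderAt hg).mp hn
  rw [← Nat.cast_add, natCast_le_analyticOrderAt (by exact hf.mul hg)]
  refine ⟨fun z ↦ F z * G z, hF.mul hG, ?_⟩
  filter_upwards [hfF, hgG] with z hfz hgz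
  rw [hfz, hgz, smul_mul_smul_comm, pow_add]

lemma le_analyticOrderAt_fun_mul_left {a f : 𝕜 → 𝔸} (ha : AnalyticAt 𝕜 a z₀)
    (hf : AnalyticAt 𝕜 f z₀) {n : ℕ} (hn : n ≤ analyticOrderAt f z₀) :
    n ≤ analyticOrderAt (fun z ↦ a z * f z) z₀ := by
  simpa using le_analyticOrderAt_fun_mul ha hf (m := 0) (by simp) hn

lemma le_analyticOrderAt_fun_mul_right {f b : 𝕜 → 𝔸} (hf : AnalyticAt 𝕜 f z₀)
    (hb : AnalyticAt 𝕜 b z₀) {n : ℕ} (hn : n ≤ analyticOrderAt f z₀) :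
    n ≤ analyticOrderAt (fun z ↦ f z * b z) z₀ := by
  simpa using le_analyticOrderAt_fun_mul hf hb hn (n := 0) (by simp)

lemma one_le_analyticOrderAt_of_eq_zero {f : 𝕜 → E} (hf : AnalyticAt 𝕜 f z₀) (h₀ : f z₀ = 0) :
    1 ≤ analyticOrderAt f z₀ :=
  Order.one_le_iff_ne_zero.mpr (hf.analyticOrderAt_ne_zero.mpr h₀)

lemma analyticOrderAt_pow_smul {f : 𝕜 → E} (hf : AnalyticAt 𝕜 f 0) (k : ℕ) :
    analyticOrderAt (fun z ↦ z ^ k • f z) 0 = k + analyticOrderAt f 0 := by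
  have hk : analyticOrderAt (fun z : 𝕜 ↦ z ^ k) 0 = k := by
    change analyticOrderAt ((id : 𝕜 → 𝕜) ^ k) 0 = k
    simp [analyticOrderAt_pow analyticAt_id]
  rw [← hk]
  exact analyticOrderAt_smul (by fun_prop) hf

lemma eq_zero_of_add_one_le_analyticOrderAt_pow_smul {k : ℕ} {c : E}
    (h : k + 1 ≤ analyticOrderAt (fun z : 𝕜 ↦ z ^ k • c) 0) : c = 0 := by
  by_contra hc
  rw [analyticOrderAt_pow_smul analyticAt_const, analyticOrderAt_eq_zero.mpr (.inr hc), add_zero,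
    ← Nat.cast_add_one, Nat.cast_le] at h
  omega

lemma exists_add_one_le_analyticOrderAt_sub_pow_smul {f : 𝕜 → E} (hf : AnalyticAt 𝕜 f 0) {k : ℕ}
    (hk : k ≤ analyticOrderAt f 0) :
    ∃ c : E, k + 1 ≤ analyticOrderAt (fun z ↦ f z - z ^ k • c) 0 := by
  obtain ⟨g, hg, hfg⟩ := (natCast_le_analyticOrderAt hf).mp hk
  refine ⟨g 0, ?_⟩
  rw [analyticOrderAt_congr (g := fun z ↦ z ^ k • (g z - g 0)),
    analyticOrderAt_pow_smul (by fun_prop)]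
  · exact add_le_add_right
      (one_le_analyticOrderAt_of_eq_zero (hg.sub analyticAt_const) (sub_self _)) _
  · filter_upwards [hfg] with z hz
    simp [hz, smul_sub]

lemma two_le_analyticOrderAt_commutator_commutator {u : 𝕜 → 𝔸} (hu : AnalyticAt 𝕜 u z₀)
    (hu₀ : u z₀ = 1) (K : 𝔸) :
    2 ≤ analyticOrderAt (fun z ↦ (K * u z - u z * K) * u z - u z * (K * u z - u z * K)) z₀ := by
  have hW : AnalyticAt 𝕜 (fun z ↦ K * u z - u z * K) z₀ := by fun_prop
  have hW₀ := one_le_analyticOrderAt_of_eq_zero hW (by simp [hu₀])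
  have hv₀ := one_le_analyticOrderAt_of_eq_zero (hu.sub analyticAt_const) (sub_eq_zero.mpr hu₀)
  have hcomm : (fun z ↦ (K * u z - u z * K) * u z - u z * (K * u z - u z * K)) =
      fun z ↦ (K * u z - u z * K) * (u z - 1) - (u z - 1) * (K * u z - u z * K) := by
    ext z
    noncomm_ring
  rw [hcomm]
  exact le_analyticOrderAt_fun_sub (le_analyticOrderAt_fun_mul hW (by fun_prop) hW₀ hv₀)
    (le_analyticOrderAt_fun_mul (by fun_prop) hW hv₀ hW₀)

lemma exists_norm_le_mul_pow_of_le_analyticOrderAt {f : 𝕜 → E} (hf : AnalyticAt 𝕜 f 0) {n : ℕ}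
    (hn : n ≤ analyticOrderAt f 0) :
    ∃ C δ : ℝ, 0 < C ∧ 0 < δ ∧ ∀ z, ‖z‖ ≤ δ → ‖f z‖ ≤ C * ‖z‖ ^ n := by
  obtain ⟨g, hg, hfg⟩ := (natCast_le_analyticOrderAt hf).mp hn
  have hbound : ∀ᶠ z in 𝓝 0, ‖g z‖ < ‖g 0‖ + 1 :=
    hg.continuousAt.norm.eventually (gt_mem_nhds (lt_add_one _))
  obtain ⟨ε, hε, hball⟩ := Metric.eventually_nhds_iff.mp (hfg.and hbound)
  refine ⟨‖g 0‖ + 1, ε / 2, by positivity, half_pos hε, fun z hz ↦ ?_⟩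
  obtain ⟨hfz, hgz⟩ := hball (by simpa using hz.trans_lt (half_lt_self hε))
  rw [hfz, sub_zero, norm_smul, norm_pow, mul_comm]
  gcongr

variable [CharZero 𝕜]

lemma two_le_analyticOrderAt_of_hasDerivAt [CompleteSpace E] {f : 𝕜 → E}
    (hf : AnalyticAt 𝕜 f 0) (h₀ : f 0 = 0) (h' : HasDerivAt f 0 0) : 2 ≤ analyticOrderAt f 0 := by
  refine (natCast_le_analyticOrderAt_iff_iteratedDeriv_eq_zero (n := 2) hf).mpr fun i hi ↦ ?_
  interval_cases i
  · simpa using h₀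
  · simpa using h'.deriv

variable [CompleteSpace 𝕜]

lemma analyticOrderAt_comp_neg (f : 𝕜 → E) :
    analyticOrderAt (fun z ↦ f (-z)) 0 = analyticOrderAt f 0 := by
  simpa [Function.comp_def] using analyticOrderAt_comp_of_deriv_ne_zero (f := f)
    (g := fun z : 𝕜 ↦ -z) (z₀ := 0) (by fun_prop) (by simp)

lemma analyticOrderAt_comp_div_const (f : 𝕜 → E) {c : 𝕜} (hc : c ≠ 0) :
    analyticOrderAt (fun z ↦ f (z / c)) 0 = analyticOrderAt f 0 := by
  simpa [Function.comp_def] using analyticOrderAt_comp_of_deriv_ne_zero (f := f)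
    (g := fun z : 𝕜 ↦ z / c) (z₀ := 0) (by fun_prop) (by simp [hc])

lemma add_one_le_analyticOrderAt_of_even {f : 𝕜 → E} (hf : AnalyticAt 𝕜 f 0) {k : ℕ}
    (hk : Even k) (hfk : k ≤ analyticOrderAt f 0)
    (hsymm : k + 1 ≤ analyticOrderAt (fun z ↦ f z + f (-z)) 0) : k + 1 ≤ analyticOrderAt f 0 := by
  obtain ⟨c, hc⟩ := exists_add_one_le_analyticOrderAt_sub_pow_smul hf hfk
  have hc_neg : k + 1 ≤ analyticOrderAt (fun z ↦ f (-z) - (-z) ^ k • c) 0 := by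
    rwa [analyticOrderAt_comp_neg (fun z ↦ f z - z ^ k • c)]
  have h2c : k + 1 ≤ analyticOrderAt (fun z : 𝕜 ↦ z ^ k • ((2 : 𝕜) • c)) 0 := by
    convert le_analyticOrderAt_fun_sub (le_analyticOrderAt_fun_sub hsymm hc) hc_neg using 3 with z
    rw [hk.neg_pow]
    module
  obtain rfl : c = 0 := by
    simpa using eq_zero_of_add_one_le_analyticOrderAt_pow_smul h2c
  simpa using hc

variable {M : 𝕜 → 𝔸}

lemma le_analyticOrderAt_add_comp_neg_of_mul_neg_eq_one (hM : AnalyticAt 𝕜 M 0)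
    (hsymm : ∀ z, M z * M (-z) = 1) {k : ℕ} (hk : k ≤ analyticOrderAt (fun z ↦ M z - 1) 0) :
    (k + k : ℕ∞) ≤ analyticOrderAt (fun z ↦ (M z - 1) + (M (-z) - 1)) 0 := by
  have hM_neg : AnalyticAt 𝕜 (fun z ↦ M (-z)) 0 := hM.comp_of_eq analyticAt_id.neg neg_zero
  have hk_neg : k ≤ analyticOrderAt (fun z ↦ M (-z) - 1) 0 := by
    rwa [analyticOrderAt_comp_neg (fun z ↦ M z - 1)]
  have hsum : (fun z ↦ (M z - 1) + (M (-z) - 1)) = -fun z ↦ (M z - 1) * (M (-z) - 1) := by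
    ext z
    simp only [Pi.neg_apply, sub_mul, mul_sub, mul_one, one_mul, hsymm z]
    abel
  rw [hsum, analyticOrderAt_neg]
  exact le_analyticOrderAt_fun_mul (by fun_prop) (hM_neg.sub analyticAt_const) hk hk_neg

theorem exists_five_le_analyticOrderAt_of_mul_neg_eq_one (hM : AnalyticAt 𝕜 M 0)
    (hsymm : ∀ z, M z * M (-z) = 1) (h2 : 2 ≤ analyticOrderAt (fun z ↦ M z - 1) 0) :
    ∃ K : 𝔸, 5 ≤ analyticOrderAt (fun z ↦ M z - 1 - z ^ 3 • K) 0 := by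
  have hR : AnalyticAt 𝕜 (fun z ↦ M z - 1) 0 := by fun_prop
  have h4 := le_analyticOrderAt_add_comp_neg_of_mul_neg_eq_one hM hsymm h2
  have h3 : 3 ≤ analyticOrderAt (fun z ↦ M z - 1) 0 :=
    add_one_le_analyticOrderAt_of_even (k := 2) hR even_two h2 (h4.trans' (by norm_num))
  have h6 := le_analyticOrderAt_add_comp_neg_of_mul_neg_eq_one hM hsymm h3
  obtain ⟨K, hK⟩ := exists_add_one_le_analyticOrderAt_sub_pow_smul hR h3
  have hK_symm : (fun z ↦ (M z - 1 - z ^ 3 • K) + (M (-z) - 1 - (-z) ^ 3 • K)) =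
      fun z ↦ (M z - 1) + (M (-z) - 1) := by
    ext z
    rw [Odd.neg_pow (by decide), neg_smul]
    abel
  refine ⟨K, add_one_le_analyticOrderAt_of_even (k := 4) (by fun_prop) (by decide)
    (hK.trans' (by norm_num)) ?_⟩
  rw [hK_symm]
  exact h6.trans' (by norm_num)

end AnalyticOrder

lemma extrapolation_identity {𝕜 𝔸 : Type*} [Field 𝕜] [CharZero 𝕜] [Ring 𝔸] [Algebra 𝕜 𝔸]
    (h : 𝕜) (u m m' K : 𝔸) :
    (-(1 / 3 : 𝕜)) • (u * u * m * (u * u)) + (4 / 3 : 𝕜) • (u * m' * u * (u * m' * u)) -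
        u * u * (u * u) =
      h ^ 3 • (u * ((1 / 6 : 𝕜) • ((K * u - u * K) * u - u * (K * u - u * K))) * u) +
      (u * u) * ((-(1 / 3 : 𝕜)) • (m - 1 - h ^ 3 • K)) * (u * u) +
      u * ((4 / 3 : 𝕜) • ((m' - 1 - (h / 2) ^ 3 • K) * (u * u) +
        (u * u) * (m' - 1 - (h / 2) ^ 3 • K) + (m' - 1) * (u * u) * (m' - 1))) * u := by
  simp only [mul_add, add_mul, mul_sub, sub_mul, smul_mul_assoc, mul_smul_comm, smul_add,
    smul_sub, mul_assoc, one_mul, mul_one]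
  module

section RatAlgebra

variable {𝔸 : Type*} [NormedRing 𝔸] [NormedAlgebra ℚ 𝔸] [CompleteSpace 𝔸]

lemma exp_mul_exp_neg (x : 𝔸) : exp x * exp (-x) = 1 := by
  rw [← exp_add_of_commute (Commute.neg_right (Commute.refl x)), add_neg_cancel, exp_zero]

lemma exp_neg_mul_exp (x : 𝔸) : exp (-x) * exp x = 1 := by
  simpa using exp_mul_exp_neg (-x)

end RatAlgebra

section Exponential

variable {𝕂 : Type*} [RCLike 𝕂] {𝔸 : Type*} [NormedRing 𝔸] [NormedAlgebra 𝕂 𝔸]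
  [CompleteSpace 𝔸]

@[fun_prop]
lemma AnalyticAt.exp {f : 𝕂 → 𝔸} {z : 𝕂} (hf : AnalyticAt 𝕂 f z) :
    AnalyticAt 𝕂 (fun x ↦ exp (f x)) z :=
  (exp_analytic (f z)).comp hf

lemma exp_smul_eq_exp_half_smul_mul_self (s : 𝕂) (x : 𝔸) :
    exp (s • x) = exp ((s / 2) • x) * exp ((s / 2) • x) := by
  let : NormedAlgebra ℚ 𝔸 := .restrictScalars ℚ 𝕂 𝔸
  rw [← exp_add_of_commute (Commute.refl _), ← add_smul, add_halves]

theorem five_le_analyticOrderAt_extrapolation (X K : 𝔸) {M S : 𝕂 → 𝔸} (hM : AnalyticAt 𝕂 M 0)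
    (hMK : 5 ≤ analyticOrderAt (fun h ↦ M h - 1 - h ^ 3 • K) 0)
    (hS : ∀ h, S h = exp ((h / 2) • X) * M h * exp ((h / 2) • X)) :
    5 ≤ analyticOrderAt (fun h ↦ (-(1 / 3 : 𝕂)) • S h + (4 / 3 : 𝕂) • (S (h / 2) * S (h / 2)) -
      exp (h • X)) 0 := by
  set u : 𝕂 → 𝔸 := fun h ↦ exp ((h / 2 / 2) • X)
  have hu : AnalyticAt 𝕂 u 0 := by fun_prop
  -- the form in which `fun_prop` asks for it when it meets `fun h ↦ M (h / 2)`
  have hM_half : AnalyticAt 𝕂 M (0 / 2) := by simpa using hM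
  have hu_def (h : 𝕂) : exp ((h / 2 / 2) • X) = u h := rfl
  have hu_sq (h : 𝕂) : exp ((h / 2) • X) = u h * u h := exp_smul_eq_exp_half_smul_mul_self _ _
  have hu_four (h : 𝕂) : exp (h • X) = u h * u h * (u h * u h) := by
    rw [exp_smul_eq_exp_half_smul_mul_self, hu_sq]
  have hM3 : 3 ≤ analyticOrderAt (fun h ↦ M h - 1) 0 := by
    have hK3 : 3 ≤ analyticOrderAt (fun h : 𝕂 ↦ h ^ 3 • K) 0 := by
      rw [analyticOrderAt_pow_smul analyticAt_const]
      exact le_self_add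
    simpa using le_analyticOrderAt_fun_add hK3 (hMK.trans' (by norm_num))
  have hM3' : 3 ≤ analyticOrderAt (fun h ↦ M (h / 2) - 1) 0 := by
    rwa [analyticOrderAt_comp_div_const (fun h ↦ M h - 1) two_ne_zero]
  have hMK' : 5 ≤ analyticOrderAt (fun h ↦ M (h / 2) - 1 - (h / 2) ^ 3 • K) 0 := by
    rwa [analyticOrderAt_comp_div_const (fun h ↦ M h - 1 - h ^ 3 • K) two_ne_zero]
  have hcomm := two_le_analyticOrderAt_commutator_commutator hu (by simp [u]) K
  -- fold `u` first: `hu_sq` would also split `exp ((h / 2 / 2) • X)`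
  simp only [hS, hu_def]
  simp only [hu_sq, hu_four]
  rw [funext fun h ↦ extrapolation_identity h (u h) (M h) (M (h / 2)) K]
  refine le_analyticOrderAt_fun_add (le_analyticOrderAt_fun_add ?_ ?_) ?_
  · rw [analyticOrderAt_pow_smul (by fun_prop)]
    have := le_analyticOrderAt_fun_mul_right (by fun_prop) hu (le_analyticOrderAt_fun_mul_left hu
      (by fun_prop) (hcomm.trans (le_analyticOrderAt_const_smul (by fun_prop) (1 / 6 : 𝕂))))
    calc (5 : ℕ∞) = (3 : ℕ) + 2 := by norm_num
      _ ≤ _ := add_le_add le_rfl this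
  · exact le_analyticOrderAt_fun_mul_right (by fun_prop) (by fun_prop)
      (le_analyticOrderAt_fun_mul_left (by fun_prop) (by fun_prop)
        (hMK.trans (le_analyticOrderAt_const_smul (by fun_prop) _)))
  · refine le_analyticOrderAt_fun_mul_right (by fun_prop) hu (le_analyticOrderAt_fun_mul_left hu
      (by fun_prop) ((le_analyticOrderAt_fun_add (le_analyticOrderAt_fun_add ?_ ?_) ?_).trans
        (le_analyticOrderAt_const_smul (by fun_prop) _)))
    · exact le_analyticOrderAt_fun_mul_right (by fun_prop) (by fun_prop) hMK'
    · exact le_analyticOrderAt_fun_mul_left (by fun_prop) (by fun_prop) hMK'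
    · exact (le_analyticOrderAt_fun_mul (by fun_prop) (by fun_prop)
        (le_analyticOrderAt_fun_mul_right (by fun_prop) (by fun_prop) hM3') hM3').trans'
          (by norm_num)

variable (A B : 𝔸)

noncomputable def strang (h : 𝕂) : 𝔸 := exp ((h / 2) • B) * exp (h • A) * exp ((h / 2) • B)

noncomputable def strangErrorFactor (h : 𝕂) : 𝔸 :=
  exp ((-(h / 2)) • (A + B)) * strang A B h * exp ((-(h / 2)) • (A + B))

lemma strang_eq_exp_mul_strangErrorFactor_mul_exp (h : 𝕂) :
    strang A B h = exp ((h / 2) • (A + B)) * strangErrorFactor A B h * exp ((h / 2) • (A + B)) := by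
  let : NormedAlgebra ℚ 𝔸 := .restrictScalars ℚ 𝕂 𝔸
  simp only [strangErrorFactor, neg_smul, ← mul_assoc, exp_mul_exp_neg, one_mul]
  rw [mul_assoc, exp_neg_mul_exp, mul_one]

lemma strangErrorFactor_mul_neg (h : 𝕂) :
    strangErrorFactor A B h * strangErrorFactor A B (-h) = 1 := by
  let : NormedAlgebra ℚ 𝔸 := .restrictScalars ℚ 𝕂 𝔸
  have cancel (x y : 𝔸) : exp x * (exp (-x) * y) = y := by
    rw [← mul_assoc, exp_mul_exp_neg, one_mul]
  have cancel' (x y : 𝔸) : exp (-x) * (exp x * y) = y := by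
    rw [← mul_assoc, exp_neg_mul_exp, one_mul]
  simp only [strangErrorFactor, strang, neg_div, neg_smul, neg_neg, mul_assoc, cancel, cancel',
    exp_neg_mul_exp]

lemma analyticAt_strangErrorFactor (z : 𝕂) : AnalyticAt 𝕂 (strangErrorFactor A B) z := by
  unfold strangErrorFactor strang
  fun_prop

lemma hasDerivAt_exp_smul_comp (Y : 𝔸) {f : 𝕂 → 𝕂} {f' : 𝕂} (hf : HasDerivAt f f' 0)
    (hf₀ : f 0 = 0) : HasDerivAt (fun t ↦ exp (f t • Y)) (f' • Y) 0 := by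
  simpa [hf₀, Function.comp_def] using (hasDerivAt_exp_smul_const Y (f 0)).scomp 0 hf

lemma two_le_analyticOrderAt_strangErrorFactor_sub_one :
    2 ≤ analyticOrderAt (fun h : 𝕂 ↦ strangErrorFactor A B h - 1) 0 := by
  have hhalf : HasDerivAt (fun t : 𝕂 ↦ t / 2) (1 / 2) 0 := (hasDerivAt_id (0 : 𝕂)).div_const 2
  have hE := hasDerivAt_exp_smul_comp (A + B) hhalf.neg (by simp)
  have hB := hasDerivAt_exp_smul_comp B hhalf (by simp)
  have hA := hasDerivAt_exp_smul_comp A (hasDerivAt_id (0 : 𝕂)) rfl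
  refine two_le_analyticOrderAt_of_hasDerivAt
    ((analyticAt_strangErrorFactor A B 0).sub analyticAt_const)
    (by simp [strangErrorFactor, strang]) ?_
  exact (((hE.mul ((hB.mul hA).mul hB)).mul hE).sub_const 1).congr_deriv (by simp; module)

end Exponential

open Matrix
attribute [local instance] Matrix.linftyOpNormedAddCommGroup Matrix.linftyOpNormedRing
  Matrix.linftyOpNormedAlgebra

/-- The fourth-order multi-product expansion
`T₄ h = -(1/3) T₂ h + (4/3) (T₂ (h/2))²`, with
`T₂ h = e^{(h/2)B} e^{hA} e^{(h/2)B}`, satisfies `T₄ h = e^{h(A+B)} + O(h⁵)`. -/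
theorem mpe_fourth_order (n : ℕ)
    (A B : Matrix (Fin n) (Fin n) ℝ)
    (T₂ : ℝ → Matrix (Fin n) (Fin n) ℝ)
    (hT₂ : ∀ h : ℝ, T₂ h = NormedSpace.exp ((h / 2) • B) * NormedSpace.exp (h • A) *
        NormedSpace.exp ((h / 2) • B)) :
    ∃ C δ : ℝ, 0 < C ∧ 0 < δ ∧ ∀ h : ℝ, |h| ≤ δ →
      ‖(-(1 / 3 : ℝ)) • T₂ h + (4 / 3 : ℝ) • (T₂ (h / 2) * T₂ (h / 2)) -
        NormedSpace.exp (h • (A + B))‖ ≤ C * |h| ^ 5 := by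
  obtain rfl : T₂ = strang A B := funext hT₂
  have hM := analyticAt_strangErrorFactor A B (0 : ℝ)
  obtain ⟨K, hK⟩ := exists_five_le_analyticOrderAt_of_mul_neg_eq_one hM
    (strangErrorFactor_mul_neg A B) (two_le_analyticOrderAt_strangErrorFactor_sub_one A B)
  have h5 := five_le_analyticOrderAt_extrapolation (A + B) K hM hK
    (strang_eq_exp_mul_strangErrorFactor_mul_exp A B)
  obtain ⟨C, δ, hC, hδ, hbound⟩ :=
    exists_norm_le_mul_pow_of_le_analyticOrderAt (by unfold strang; fun_prop) h5
  refine ⟨C, δ, hC, hδ, fun h hh ↦ ?_⟩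
  have := hbound h (by rwa [Real.norm_eq_abs])
  rwa [Real.norm_eq_abs] at this
end
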